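/- For two k × (n-k) matrices A and B over F_q, the subspace distance between the row spaces of [I_k | A] and [I_k | B] equals 2·rank(A - B). -/

import Mathlib

open Module

/-- The subspace distance `d_S(U,V) = dim U + dim V - 2 dim (U ⊓ V)`. -/
noncomputable def subspaceDist {F M : Type*} [Field F] [AddCommGroup M] [Module F M]
    (U V : Submodule F M) : ℤ :=
  (finrank F U : ℤ) + (finrank F V : ℤ) - 2 * (finrank F ↥(U ⊓ V) : ℤ)

/-- The row space of the `k × n` matrix `[I_k | A]` (a `k`-dimensional subspace of
`F_q^n`, with `n = k + m` coordinates indexed by `Fin k ⊕ Fin m`). -/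
noncomputable def liftSpan {F : Type*} [Field F] {k m : ℕ}
    (A : Matrix (Fin k) (Fin m) F) : Submodule F ((Fin k ⊕ Fin m) → F) :=
  Submodule.span F (Set.range fun i => Matrix.fromCols (1 : Matrix (Fin k) (Fin k) F) A i)

/-!
The row space of `[I | A]` is the graph `{(x, x A)}` of `x ↦ x A`, so two such graphs meet
exactly over the left kernel of `A - B`: the intersection has dimension `k - rank (A - B)`,
and `d_S = k + k - 2 (k - rank (A - B))`.
-/

namespace Matrix

variable {ι κ R : Type*} [Fintype ι] [DecidableEq ι]

theorem vecMul_fromCols_one [CommSemiring R] (A : Matrix ι κ R) (x : ι → R) :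
    x ᵥ* fromCols (1 : Matrix ι ι _) A = Sum.elim x (x ᵥ* A) := by
  rw [vecMul_fromCols, vecMul_one]

theorem vecMulLinear_fromCols_one_injective [CommSemiring R] (A : Matrix ι κ R) :
    Function.Injective (fromCols (1 : Matrix ι ι _) A).vecMulLinear := fun x y h => by
  simp only [vecMulLinear_apply, vecMul_fromCols_one] at h
  exact (Sum.elim_eq_iff.mp h).1

theorem range_vecMulLinear_fromCols_one_inf [CommRing R] (A B : Matrix ι κ R) :
    LinearMap.range (fromCols (1 : Matrix ι ι _) A).vecMulLinear ⊓
        LinearMap.range (fromCols (1 : Matrix ι ι _) B).vecMulLinear =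
      (LinearMap.ker (A - B).vecMulLinear).map (fromCols (1 : Matrix ι ι _) A).vecMulLinear := by
  ext u
  simp only [Submodule.mem_inf, LinearMap.mem_range, Submodule.mem_map, LinearMap.mem_ker,
    vecMulLinear_apply, vecMul_fromCols_one, vecMul_sub, sub_eq_zero]
  constructor
  · rintro ⟨⟨x, rfl⟩, y, hyx⟩
    obtain ⟨rfl, hBA⟩ := Sum.elim_eq_iff.mp hyx
    exact ⟨y, hBA.symm, rfl⟩
  · rintro ⟨x, hAB, rfl⟩
    exact ⟨⟨x, rfl⟩, x, by rw [hAB]⟩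

variable {F : Type*} [Field F]

theorem finrank_range_vecMulLinear_fromCols_one (A : Matrix ι κ F) :
    finrank F (LinearMap.range (fromCols (1 : Matrix ι ι _) A).vecMulLinear) =
      Fintype.card ι := by
  rw [LinearMap.finrank_range_of_inj (vecMulLinear_fromCols_one_injective A),
    finrank_fintype_fun_eq_card]

theorem finrank_range_vecMulLinear_fromCols_one_inf_add_rank [Fintype κ] (A B : Matrix ι κ F) :
    finrank F ↥(LinearMap.range (fromCols (1 : Matrix ι ι _) A).vecMulLinear ⊓
        LinearMap.range (fromCols (1 : Matrix ι ι _) B).vecMulLinear) + (A - B).rank =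
      Fintype.card ι := by
  rw [range_vecMulLinear_fromCols_one_inf, ← LinearEquiv.finrank_eq
    (Submodule.equivMapOfInjective _ (vecMulLinear_fromCols_one_injective A) _),
    rank_eq_finrank_span_row, ← range_vecMulLinear, add_comm,
    LinearMap.finrank_range_add_finrank_ker, finrank_fintype_fun_eq_card]

end Matrix

section liftSpan

variable {F : Type*} [Field F] {k m : ℕ}

theorem liftSpan_eq_range (A : Matrix (Fin k) (Fin m) F) :
    liftSpan A = LinearMap.range (Matrix.fromCols 1 A).vecMulLinear :=
  (range_vecMulLinear _).symm

theorem finrank_liftSpan (A : Matrix (Fin k) (Fin m) F) : finrank F (liftSpan A) = k := by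
  rw [liftSpan_eq_range, Matrix.finrank_range_vecMulLinear_fromCols_one, Fintype.card_fin]

theorem finrank_liftSpan_inf_add_rank (A B : Matrix (Fin k) (Fin m) F) :
    finrank F ↥(liftSpan A ⊓ liftSpan B) + (A - B).rank = k := by
  rw [liftSpan_eq_range, liftSpan_eq_range,
    Matrix.finrank_range_vecMulLinear_fromCols_one_inf_add_rank, Fintype.card_fin]

end liftSpan

theorem subspaceDist_liftSpan_general (F : Type*) [Field F] (k m : ℕ)
    (A B : Matrix (Fin k) (Fin m) F) :
    subspaceDist (liftSpan A) (liftSpan B) = 2 * ((A - B).rank : ℤ) := by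
  have hinf := finrank_liftSpan_inf_add_rank A B
  rw [subspaceDist, finrank_liftSpan, finrank_liftSpan]
  omega

/-- For two `k × (n-k)` matrices `A` and `B` over `F_q`, the subspace distance between
the row spaces of `[I_k | A]` and `[I_k | B]` equals `2 · rank (A - B)`. -/
theorem subspaceDist_liftSpan (F : Type*) [Field F] [Fintype F] (k m : ℕ)
    (A B : Matrix (Fin k) (Fin m) F) :
    subspaceDist (liftSpan A) (liftSpan B) = 2 * ((A - B).rank : ℤ) :=
  subspaceDist_liftSpan_general F k m A B
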